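/- arXiv:1511.06086 — 4 statements merged into one kernel-verified Lean document; each statement's English description precedes it below -/
import Mathlib

section
/- For every natural number n, the quantity λ̌_n := i·J'_n(i)/J_n(i), where J_n is the Bessel function of the first kind of order n, satisfies n < λ̌_n < n + 1/2. -/
/-- Bessel function of the first kind of integer order `n`, as a power series. -/
noncomputable def besselJ (n : ℕ) (z : ℂ) : ℂ :=
  ∑' k : ℕ, ((-1) ^ k / ((Nat.factorial k : ℂ) * (Nat.factorial (n + k) : ℂ))) * (z / 2) ^ (2 * k + n)

/-- For every `n : ℕ`, the quantity `λ̌_n = i·J'_n(i)/J_n(i)` is real and satisfies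
`n < λ̌_n < n + 1/2`. -/
theorem robin_disc_DtN_eigenvalue_bounds (n : ℕ) :
    (Complex.I * deriv (besselJ n) Complex.I / besselJ n Complex.I).im = 0 ∧
    (n : ℝ) < (Complex.I * deriv (besselJ n) Complex.I / besselJ n Complex.I).re ∧
    (Complex.I * deriv (besselJ n) Complex.I / besselJ n Complex.I).re < n + 1 / 2 := by
  classical
  set a : ℕ → ℝ := fun k => ((4:ℝ)^k * k.factorial * (n+k).factorial)⁻¹ with ha
  set g : ℕ → ℂ → ℂ := fun k z =>
    ((-1) ^ k / ((Nat.factorial k : ℂ) * (Nat.factorial (n + k) : ℂ))) * (z / 2) ^ (2 * k + n) with hgdef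
  set g' : ℕ → ℂ → ℂ := fun k z =>
    ((-1) ^ k / ((Nat.factorial k : ℂ) * (Nat.factorial (n + k) : ℂ))) *
      ((2*k+n : ℕ) * (z / 2) ^ (2 * k + n - 1) * (1/2)) with hg'def
  -- positivity of a
  have hapos : ∀ k, 0 < a k := by
    intro k
    have : (0:ℝ) < (4:ℝ)^k * k.factorial * (n+k).factorial := by positivity
    exact inv_pos.2 this
  -- a k ≤ (3/4)^k
  have hak : ∀ k, a k ≤ (3/4:ℝ)^k := by
    intro k
    have h2 : (1:ℝ) ≤ (k.factorial : ℝ) := by exact_mod_cast k.factorial_pos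
    have h3 : (1:ℝ) ≤ ((n+k).factorial : ℝ) := by exact_mod_cast (n+k).factorial_pos
    have h1 : ((4:ℝ)^k) ≤ (4:ℝ)^k * k.factorial * (n+k).factorial := by
      calc (4:ℝ)^k = 4^k * 1 * 1 := by ring
        _ ≤ (4:ℝ)^k * k.factorial * (n+k).factorial := by
            apply mul_le_mul (mul_le_mul_of_nonneg_left h2 (by positivity)) h3 (by norm_num) (by positivity)
    calc a k ≤ ((4:ℝ)^k)⁻¹ := inv_anti₀ (by positivity) h1
      _ = ((1:ℝ)/4)^k := by rw [one_div, inv_pow]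
      _ ≤ ((3:ℝ)/4)^k := by
          apply pow_le_pow_left₀ (by norm_num) (by norm_num)
  -- summable majorant u
  set u : ℕ → ℝ := fun k => (2*(k:ℝ)+n) * (3/4)^k with hu
  have hu_sum : Summable u := by
    have h1 : Summable (fun k : ℕ => (k:ℝ)*(3/4)^k) := by
      simpa using summable_pow_mul_geometric_of_norm_lt_one 1 (r := (3/4:ℝ)) (by norm_num)
    have h2 : Summable (fun k : ℕ => ((3:ℝ)/4)^k) :=
      summable_geometric_of_lt_one (by norm_num) (by norm_num)
    have := (h1.mul_left 2).add (h2.mul_left (n:ℝ))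
    apply this.congr
    intro k; rw [hu]; ring
  -- summability of the real series
  have hA : Summable a := by
    apply Summable.of_nonneg_of_le (fun k => (hapos k).le) hak
      (summable_geometric_of_lt_one (by norm_num) (by norm_num))
  have hB : Summable (fun k : ℕ => (2*(k:ℝ)+n) * a k) := by
    apply Summable.of_nonneg_of_le (fun k => by positivity) (fun k => ?_) hu_sum
    rw [hu]
    have : (0:ℝ) ≤ 2*(k:ℝ)+n := by positivity
    exact mul_le_mul_of_nonneg_left (hak k) this
  have hT : Summable (fun k : ℕ => 2*(k:ℝ) * a k) := by
    apply Summable.of_nonneg_of_le (fun k => by positivity) (fun k => ?_) hu_sum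
    rw [hu]
    calc 2*(k:ℝ) * a k ≤ (2*(k:ℝ)+n) * a k := by
          apply mul_le_mul_of_nonneg_right _ (hapos k).le
          have := Nat.cast_nonneg (α := ℝ) n
          linarith
      _ ≤ (2*(k:ℝ)+n) * (3/4)^k := mul_le_mul_of_nonneg_left (hak k) (by positivity)
  -- derivative of each term
  have hg : ∀ k z, HasDerivAt (g k) (g' k z) z := by
    intro k z
    have h1 : HasDerivAt (fun z : ℂ => z / 2) (1/2) z :=
      (hasDerivAt_id z).div_const 2 |>.congr_deriv (by norm_num)
    have h2 := (h1.pow (2*k+n)).const_mul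
      ((-1:ℂ) ^ k / ((Nat.factorial k : ℂ) * (Nat.factorial (n + k) : ℂ)))
    convert h2 using 1
    all_goals rfl
  -- evaluation of g at I
  have hgI : ∀ k, g k Complex.I = (Complex.I/2)^n * ((a k : ℝ) : ℂ) := by
    intro k
    have hfk : ((k.factorial : ℂ)) ≠ 0 := Nat.cast_ne_zero.2 k.factorial_ne_zero
    have hfnk : (((n+k).factorial : ℂ)) ≠ 0 := Nat.cast_ne_zero.2 (n+k).factorial_ne_zero
    have hsq : (Complex.I/2)^2 = -(4:ℂ)⁻¹ := by
      rw [div_pow, Complex.I_sq]; norm_num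
    rw [hgdef]
    simp only []
    rw [pow_add, pow_mul, hsq, ha]
    push_cast
    rw [neg_pow]
    field_simp
    ring_nf
    have h12 : ((-1:ℂ)) ^ (k*2) = 1 := by rw [mul_comm k 2, pow_mul]; norm_num
    rw [← mul_pow, ← mul_pow]; norm_num
  -- I * g' k I = (2k+n) * g k I
  have hg'I : ∀ k, Complex.I * g' k Complex.I = ((2*k+n : ℕ) : ℂ) * g k Complex.I := by
    intro k
    rcases Nat.eq_zero_or_pos (2*k+n) with h | h
    · have hk : k = 0 := by omega
      have hn : n = 0 := by omega
      subst hk; subst hn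
      simp [hg'def, hgdef]
    · obtain ⟨m, hm⟩ : ∃ m, 2*k+n = m+1 := ⟨2*k+n-1, by omega⟩
      rw [hg'def, hgdef]
      simp only []
      rw [hm]
      simp only [Nat.add_sub_cancel]
      rw [pow_succ]
      push_cast
      ring_nf
  -- summability of g at I
  have hSa : Summable (fun k => ((a k : ℝ) : ℂ)) :=
    hA.map Complex.ofRealHom.toAddMonoidHom Complex.continuous_ofReal
  have hSgI : Summable (fun k => g k Complex.I) := by
    apply ((hSa.mul_left ((Complex.I/2)^n)).congr)
    intro k; exact (hgI k).symm
  -- norm bound on the derivative terms on the ball of radius 3/2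
  have hIball : Complex.I ∈ Metric.ball (0:ℂ) (3/2) := by
    rw [Metric.mem_ball, dist_zero_right, Complex.norm_I]; norm_num
  have hbound : ∀ k, ∀ z ∈ Metric.ball (0:ℂ) (3/2), ‖g' k z‖ ≤ u k := by
    intro k z hz
    rw [Metric.mem_ball, dist_zero_right] at hz
    have hz' : ‖z/2‖ ≤ 3/4 := by
      rw [norm_div, Complex.norm_ofNat]
      linarith
    have he : ‖(z/2) ^ (2*k+n-1)‖ ≤ (3/4:ℝ)^k := by
      rw [norm_pow]
      calc ‖z/2‖^(2*k+n-1) ≤ ((3:ℝ)/4)^(2*k+n-1) :=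
            pow_le_pow_left₀ (norm_nonneg _) hz' _
        _ ≤ ((3:ℝ)/4)^k := pow_le_pow_of_le_one (by norm_num) (by norm_num) (by omega)
    have hc : ‖((-1:ℂ)) ^ k / ((k.factorial:ℂ) * (((n + k).factorial:ℕ):ℂ))‖ ≤ 1 := by
      rw [norm_div, norm_pow, norm_neg, norm_one, one_pow, norm_mul,
        Complex.norm_natCast, Complex.norm_natCast]
      rw [div_le_one (by positivity)]
      calc (1:ℝ) = 1 * 1 := by ring
        _ ≤ (k.factorial:ℝ) * ((n+k).factorial:ℝ) := by
            apply mul_le_mul (by exact_mod_cast k.factorial_pos)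
              (by exact_mod_cast (n+k).factorial_pos) (by norm_num) (by positivity)
    rw [hg'def]
    simp only []
    rw [norm_mul]
    calc ‖(-1:ℂ) ^ k / ((k.factorial:ℂ) * (((n + k).factorial:ℕ):ℂ))‖ *
          ‖((2*k+n : ℕ):ℂ) * (z/2) ^ (2*k+n-1) * (1/2)‖
        ≤ 1 * ‖((2*k+n : ℕ):ℂ) * (z/2) ^ (2*k+n-1) * (1/2)‖ :=
          mul_le_mul_of_nonneg_right hc (norm_nonneg _)
      _ = ((2*k+n : ℕ):ℝ) * ‖(z/2) ^ (2*k+n-1)‖ * (1/2) := by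
          rw [one_mul, norm_mul, norm_mul, Complex.norm_natCast]
          norm_num
      _ ≤ ((2*k+n : ℕ):ℝ) * ((3/4:ℝ)^k) * (1/2) := by
          apply mul_le_mul_of_nonneg_right (mul_le_mul_of_nonneg_left he (by positivity)) (by norm_num)
      _ ≤ u k := by
          rw [hu]; push_cast
          nlinarith [pow_pos (by norm_num : (0:ℝ) < 3/4) k]
  -- derivative of besselJ at I
  have hfun : besselJ n = fun z => ∑' k, g k z := rfl
  have hD : HasDerivAt (fun z => ∑' k, g k z) (∑' k, g' k Complex.I) Complex.I :=
    hasDerivAt_tsum_of_isPreconnected hu_sum Metric.isOpen_ball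
      (convex_ball _ _).isPreconnected (fun k y _ => hg k y) hbound hIball hSgI hIball
  have hderiv : deriv (besselJ n) Complex.I = ∑' k, g' k Complex.I := by
    rw [hfun]; exact hD.deriv
  -- main quantities
  set A : ℝ := ∑' k, a k with hAdef
  set B : ℝ := ∑' k : ℕ, (2*(k:ℝ)+n) * a k with hBdef
  have hApos : 0 < A := Summable.tsum_pos hA (fun k => (hapos k).le) 0 (hapos 0)
  -- numerator
  have hnum : Complex.I * deriv (besselJ n) Complex.I = (Complex.I/2)^n * (B:ℂ) := by
    rw [hderiv, ← tsum_mul_left]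
    have hstep : ∀ k : ℕ, Complex.I * g' k Complex.I
        = (Complex.I/2)^n * (((2*(k:ℝ)+n) * a k : ℝ):ℂ) := by
      intro k; rw [hg'I k, hgI k]; push_cast; ring
    rw [tsum_congr hstep]
    rw [tsum_mul_left, hBdef, Complex.ofReal_tsum]
  -- denominator
  have hden : besselJ n Complex.I = (Complex.I/2)^n * (A:ℂ) := by
    rw [hfun]
    simp only []
    rw [tsum_congr hgI, tsum_mul_left, hAdef, Complex.ofReal_tsum]
  have hpow_ne : ((Complex.I/2)^n : ℂ) ≠ 0 :=
    pow_ne_zero _ (div_ne_zero Complex.I_ne_zero two_ne_zero)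
  have hexpr : Complex.I * deriv (besselJ n) Complex.I / besselJ n Complex.I = ((B/A : ℝ) : ℂ) := by
    rw [hnum, hden, mul_div_mul_left _ _ hpow_ne, Complex.ofReal_div]
  rw [hexpr]
  refine ⟨Complex.ofReal_im _, ?_, ?_⟩
  · -- lower bound
    rw [Complex.ofReal_re, lt_div_iff₀ hApos]
    rw [hAdef, ← tsum_mul_left]
    refine Summable.tsum_lt_tsum (i := 1) (fun k => ?_) ?_ (hA.mul_left (n:ℝ)) hB
    · apply mul_le_mul_of_nonneg_right _ (hapos k).le
      have := Nat.cast_nonneg (α := ℝ) k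
      linarith
    · apply mul_lt_mul_of_pos_right _ (hapos 1)
      push_cast; linarith
  · -- upper bound
    rw [Complex.ofReal_re, div_lt_iff₀ hApos]
    -- B = T + n*A
    set T : ℝ := ∑' k : ℕ, 2*(k:ℝ) * a k with hTdef
    have hBsplit : B = T + (n:ℝ) * A := by
      rw [hBdef, hTdef, hAdef, ← tsum_mul_left, ← Summable.tsum_add hT (hA.mul_left (n:ℝ))]
      apply tsum_congr
      intro k; ring
    have hTlt : T < (1/2) * A := by
      -- shift identity
      have hid : ∀ k : ℕ, 2*((k:ℝ)+1) * a (k+1) = (1/2) * a k / ((n:ℝ)+k+1) := by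
        intro k
        rw [ha]
        simp only []
        rw [pow_succ, Nat.factorial_succ, show n + (k+1) = (n+k)+1 from by ring,
          Nat.factorial_succ]
        have h4 : ((4:ℝ)^k) ≠ 0 := by positivity
        have hfk : ((k.factorial:ℝ)) ≠ 0 := by exact_mod_cast k.factorial_ne_zero
        have hfnk : (((n+k).factorial:ℝ)) ≠ 0 := by exact_mod_cast (n+k).factorial_ne_zero
        have hnk1 : ((n:ℝ)+k+1) ≠ 0 := by positivity
        push_cast
        field_simp
        ring
      have hTshift : T = 2*((0:ℕ):ℝ) * a 0 + ∑' k : ℕ, 2*((k:ℝ)+1) * a (k+1) := by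
        rw [hTdef, Summable.tsum_eq_zero_add hT]
        congr 1
        apply tsum_congr
        intro k; push_cast; ring
      rw [hTshift]
      simp only [Nat.cast_zero, mul_zero, zero_mul, zero_add]
      rw [hAdef, ← tsum_mul_left]
      have hfs : Summable (fun k : ℕ => 2*((k:ℝ)+1) * a (k+1)) := by
        have := (summable_nat_add_iff 1).mpr hT
        apply this.congr
        intro k; push_cast; ring
      refine Summable.tsum_lt_tsum (i := 1) (fun k => ?_) ?_ hfs (hA.mul_left (1/2))
      · rw [hid k]
        apply div_le_self (by positivity)
        have : (0:ℝ) ≤ (n:ℝ) + k := by positivity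
        linarith
      · rw [hid 1]
        apply div_lt_self (by positivity)
        have : (0:ℝ) ≤ (n:ℝ) := by positivity
        push_cast
        linarith
    rw [hBsplit]
    nlinarith
end

section
/- Suppose that for each n ≥ 1 and m ≥ 2 real numbers k'_{n,m} satisfy n + c(m−1)^{2/3}·n^{1/3} < k'_{n,m} < n + c·m^{2/3}·n^{1/3} + c·m^{4/3}·n^{-1/3} for some constant c > 0. Then the double series Σ_{n≥1} Σ_{m≥2} n² / ( k'_{n,m}² · (k'_{n,m}² − n²) ) diverges. -/
open Finset Filter

/-- If for each `n ≥ 1`, `m ≥ 2` the reals `k'_{n,m}` satisfy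
`n + c(m−1)^{2/3} n^{1/3} < k'_{n,m} < n + c m^{2/3} n^{1/3} + c m^{4/3} n^{-1/3}`
for some `c > 0`, then the double series
`Σ_{n≥1} Σ_{m≥2} n² / (k'_{n,m}² (k'_{n,m}² − n²))` diverges. -/
theorem double_series_diverges (c : ℝ) (hc : 0 < c) (k' : ℕ → ℕ → ℝ)
    (hlow : ∀ n m : ℕ, 1 ≤ n → 2 ≤ m →
      (n : ℝ) + c * ((m : ℝ) - 1) ^ ((2 : ℝ) / 3) * (n : ℝ) ^ ((1 : ℝ) / 3) < k' n m)
    (hup : ∀ n m : ℕ, 1 ≤ n → 2 ≤ m →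
      k' n m < (n : ℝ) + c * (m : ℝ) ^ ((2 : ℝ) / 3) * (n : ℝ) ^ ((1 : ℝ) / 3) +
        c * (m : ℝ) ^ ((4 : ℝ) / 3) * (n : ℝ) ^ (-(1 : ℝ) / 3)) :
    ¬ Summable (fun p : {p : ℕ × ℕ // 1 ≤ p.1 ∧ 2 ≤ p.2} =>
      ((p.1.1 : ℝ) ^ 2) /
        (k' p.1.1 p.1.2 ^ 2 * (k' p.1.1 p.1.2 ^ 2 - (p.1.1 : ℝ) ^ 2))) := by
  intro hsum
  set P : ℕ × ℕ → Prop := fun p => 1 ≤ p.1 ∧ 2 ≤ p.2 with hP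
  set f : {p : ℕ × ℕ // 1 ≤ p.1 ∧ 2 ≤ p.2} → ℝ := fun p =>
      ((p.1.1 : ℝ) ^ 2) /
        (k' p.1.1 p.1.2 ^ 2 * (k' p.1.1 p.1.2 ^ 2 - (p.1.1 : ℝ) ^ 2)) with hf
  set g : ℕ × ℕ → ℝ := fun q =>
      ((q.1 : ℝ) ^ 2) /
        (k' q.1 q.2 ^ 2 * (k' q.1 q.2 ^ 2 - (q.1 : ℝ) ^ 2)) with hgdef
  -- k' is above n
  have hk_gt : ∀ n m : ℕ, 1 ≤ n → 2 ≤ m → (n : ℝ) < k' n m := by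
    intro n m hn hm
    have h := hlow n m hn hm
    have h1 : (0:ℝ) ≤ c * ((m : ℝ) - 1) ^ ((2 : ℝ) / 3) * (n : ℝ) ^ ((1 : ℝ) / 3) := by
      apply mul_nonneg (mul_nonneg hc.le _) _
      · exact Real.rpow_nonneg (by
          have : (2:ℝ) ≤ (m:ℝ) := by exact_mod_cast hm
          linarith) _
      · exact Real.rpow_nonneg (by positivity) _
    linarith
  -- positivity of the denominators / terms
  have hfnonneg : ∀ p : {p : ℕ × ℕ // 1 ≤ p.1 ∧ 2 ≤ p.2}, 0 ≤ f p := by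
    intro ⟨⟨n, m⟩, hn, hm⟩
    have hk := hk_gt n m hn hm
    have hn0 : (0:ℝ) < (n:ℝ) := by exact_mod_cast hn
    have hk0 : (0:ℝ) < k' n m := lt_trans hn0 hk
    have hsq : (n:ℝ)^2 < k' n m ^ 2 := by nlinarith
    apply div_nonneg (by positivity)
    have : (0:ℝ) < k' n m ^ 2 * (k' n m ^ 2 - (n:ℝ)^2) := by
      apply mul_pos (by positivity); linarith
    linarith
  set D : ℝ := (1 + 2*c)^2 * ((1 + 2*c)^2 - 1) with hDdef
  have hD0 : (0:ℝ) < D := by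
    rw [hDdef]
    have h1 : (0:ℝ) < (1+2*c)^2 - 1 := by nlinarith [mul_pos hc hc]
    exact mul_pos (by positivity) h1
  -- the key pointwise lower bound for 2 ≤ m ≤ n
  have hkey : ∀ n m : ℕ, 2 ≤ n → 2 ≤ m → m ≤ n → (1/D) / (n:ℝ)^2 ≤ g (n, m) := by
    intro n m hn hm hmn
    have hn1 : (1:ℕ) ≤ n := by omega
    have hn0 : (0:ℝ) < (n:ℝ) := by exact_mod_cast hn1
    have hmn' : (m:ℝ) ≤ (n:ℝ) := by exact_mod_cast hmn
    have hm0 : (0:ℝ) ≤ (m:ℝ) := by positivity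
    have hk1 := hk_gt n m hn1 hm
    -- upper bound: k' n m < (1+2c)*n
    have h23 : (m:ℝ) ^ ((2:ℝ)/3) ≤ (n:ℝ) ^ ((2:ℝ)/3) :=
      Real.rpow_le_rpow hm0 hmn' (by norm_num)
    have h43 : (m:ℝ) ^ ((4:ℝ)/3) ≤ (n:ℝ) ^ ((4:ℝ)/3) :=
      Real.rpow_le_rpow hm0 hmn' (by norm_num)
    have hn23 : (n:ℝ) ^ ((2:ℝ)/3) * (n:ℝ) ^ ((1:ℝ)/3) = (n:ℝ) := by
      rw [← Real.rpow_add hn0]; norm_num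
    have hn43 : (n:ℝ) ^ ((4:ℝ)/3) * (n:ℝ) ^ (-(1:ℝ)/3) = (n:ℝ) := by
      rw [← Real.rpow_add hn0]; norm_num
    have hpow13 : (0:ℝ) < (n:ℝ) ^ ((1:ℝ)/3) := Real.rpow_pos_of_pos hn0 _
    have hpowm13 : (0:ℝ) < (n:ℝ) ^ (-(1:ℝ)/3) := Real.rpow_pos_of_pos hn0 _
    have hk2 : k' n m < (1 + 2*c) * (n:ℝ) := by
      have h := hup n m hn1 hm
      have e1' : (m:ℝ) ^ ((2:ℝ)/3) * (n:ℝ) ^ ((1:ℝ)/3) ≤ (n:ℝ) := by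
        calc (m:ℝ) ^ ((2:ℝ)/3) * (n:ℝ) ^ ((1:ℝ)/3)
            ≤ (n:ℝ) ^ ((2:ℝ)/3) * (n:ℝ) ^ ((1:ℝ)/3) :=
              mul_le_mul_of_nonneg_right h23 hpow13.le
          _ = (n:ℝ) := hn23
      have e2' : (m:ℝ) ^ ((4:ℝ)/3) * (n:ℝ) ^ (-(1:ℝ)/3) ≤ (n:ℝ) := by
        calc (m:ℝ) ^ ((4:ℝ)/3) * (n:ℝ) ^ (-(1:ℝ)/3)
            ≤ (n:ℝ) ^ ((4:ℝ)/3) * (n:ℝ) ^ (-(1:ℝ)/3) :=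
              mul_le_mul_of_nonneg_right h43 hpowm13.le
          _ = (n:ℝ) := hn43
      have e1 : c * (m:ℝ) ^ ((2:ℝ)/3) * (n:ℝ) ^ ((1:ℝ)/3) ≤ c * (n:ℝ) := by
        rw [mul_assoc]; exact mul_le_mul_of_nonneg_left e1' hc.le
      have e2 : c * (m:ℝ) ^ ((4:ℝ)/3) * (n:ℝ) ^ (-(1:ℝ)/3) ≤ c * (n:ℝ) := by
        rw [mul_assoc]; exact mul_le_mul_of_nonneg_left e2' hc.le
      linarith
    -- denominator bounds
    have hk0 : (0:ℝ) < k' n m := lt_trans hn0 hk1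
    have hsq : (n:ℝ)^2 < k' n m ^ 2 := pow_lt_pow_left₀ hk1 hn0.le two_ne_zero
    have hsq2 : k' n m ^ 2 < ((1+2*c) * (n:ℝ))^2 := pow_lt_pow_left₀ hk2 hk0.le two_ne_zero
    have hden_pos : (0:ℝ) < k' n m ^ 2 * (k' n m ^ 2 - (n:ℝ)^2) := by
      apply mul_pos (by positivity); linarith
    have hden_le : k' n m ^ 2 * (k' n m ^ 2 - (n:ℝ)^2) ≤ D * (n:ℝ)^4 := by
      have hx2 : k' n m ^ 2 ≤ (1+2*c)^2 * (n:ℝ)^2 := by nlinarith [hsq2]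
      have hx3 : k' n m ^ 2 - (n:ℝ)^2 ≤ ((1+2*c)^2 - 1) * (n:ℝ)^2 := by linarith [hx2]
      have h0 : (0:ℝ) ≤ k' n m ^ 2 - (n:ℝ)^2 := by linarith
      calc k' n m ^ 2 * (k' n m ^ 2 - (n:ℝ)^2)
          ≤ ((1+2*c)^2 * (n:ℝ)^2) * (((1+2*c)^2 - 1) * (n:ℝ)^2) := by
            apply mul_le_mul hx2 hx3 h0 (by positivity)
        _ = D * (n:ℝ)^4 := by rw [hDdef]; ring
    have heq : (1/D) / (n:ℝ)^2 = (n:ℝ)^2 / (D * (n:ℝ)^4) := by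
      field_simp
    rw [heq, hgdef]
    exact div_le_div_of_nonneg_left (by positivity) hden_pos hden_le
  -- the finsets
  classical
  set C : ℝ := 1 / (2*D) with hCdef
  have hC0 : (0:ℝ) < C := by positivity
  -- harmonic series divergence
  have hharm : Tendsto (fun N => ∑ i ∈ range N, C / (i:ℝ)) atTop atTop := by
    rw [← not_summable_iff_tendsto_nat_atTop_of_nonneg
      (fun n => div_nonneg hC0.le (Nat.cast_nonneg n))]
    intro h
    have h2 := h.mul_left (1/C)
    have : Summable (fun n : ℕ => 1 / (n:ℝ)) := by
      refine h2.congr fun n => ?_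
      field_simp
    exact Real.not_summable_one_div_natCast this
  obtain ⟨N, hN⟩ : ∃ N, (∑' p, f p) + C < ∑ i ∈ range N, C / (i:ℝ) :=
    ((hharm.eventually_gt_atTop _).exists)
  -- build the finset of pairs
  set t : Finset (ℕ × ℕ) :=
    (Icc 2 N).biUnion (fun n => (Icc 2 n).image (fun m => (n, m))) with htdef
  have ht : ∀ p ∈ t, P p := by
    intro p hp
    simp only [htdef, mem_biUnion, mem_image, mem_Icc] at hp
    obtain ⟨n, hn, m, hm, rfl⟩ := hp
    exact ⟨by omega, by omega⟩
  set s : Finset {p : ℕ × ℕ // 1 ≤ p.1 ∧ 2 ≤ p.2} :=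
    t.attach.map ⟨fun x => ⟨x.1, ht x.1 x.2⟩,
      fun a b h => by
        apply Subtype.ext
        have h2 := congrArg Subtype.val h
        simpa using h2⟩ with hsdef
  have hsum_s : ∑ p ∈ s, f p = ∑ q ∈ t, g q := by
    rw [hsdef, Finset.sum_map]
    exact Finset.sum_attach t g
  have hsum_t : ∑ q ∈ t, g q = ∑ n ∈ Icc 2 N, ∑ m ∈ Icc 2 n, g (n, m) := by
    rw [htdef, Finset.sum_biUnion]
    · refine Finset.sum_congr rfl fun n _ => ?_
      rw [Finset.sum_image]
      intro a _ b _ hab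
      exact (Prod.mk.injEq _ _ _ _ ▸ hab).2
    · intro a _ b _ hab
      simp only [Finset.disjoint_left, mem_image, mem_Icc]
      rintro ⟨x, y⟩ ⟨m, hm, heq⟩ ⟨m', hm', heq'⟩
      have := (Prod.mk.injEq _ _ _ _ ▸ heq).1
      have := (Prod.mk.injEq _ _ _ _ ▸ heq').1
      exact hab (by omega)
  -- lower bound for the inner sums
  have hinner : ∀ n ∈ Icc 2 N, C / (n:ℝ) ≤ ∑ m ∈ Icc 2 n, g (n, m) := by
    intro n hn
    rw [mem_Icc] at hn
    have hn2 : (2:ℕ) ≤ n := hn.1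
    have hn2' : (2:ℝ) ≤ (n:ℝ) := by exact_mod_cast hn2
    have hn0 : (0:ℝ) < (n:ℝ) := by linarith
    have step1 : ∑ m ∈ Icc 2 n, (1/D) / (n:ℝ)^2 ≤ ∑ m ∈ Icc 2 n, g (n, m) :=
      Finset.sum_le_sum fun m hm => by
        rw [mem_Icc] at hm; exact hkey n m hn2 hm.1 hm.2
    have hcard : (Icc 2 n).card = n - 1 := by
      rw [Nat.card_Icc]; omega
    have step2 : ∑ m ∈ Icc 2 n, (1/D) / (n:ℝ)^2 = ((n:ℝ) - 1) * ((1/D) / (n:ℝ)^2) := by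
      rw [Finset.sum_const, hcard, nsmul_eq_mul]
      congr 1
      have : ((n - 1 : ℕ) : ℝ) = (n:ℝ) - 1 := by
        rw [Nat.cast_sub (by omega)]; norm_num
      rw [this]
    have step3 : C / (n:ℝ) ≤ ((n:ℝ) - 1) * ((1/D) / (n:ℝ)^2) := by
      rw [hCdef]
      have h1 : 1/(2*D) / (n:ℝ) = 1/(2*D*(n:ℝ)) := by field_simp
      have h2 : ((n:ℝ)-1) * (1/D/(n:ℝ)^2) = ((n:ℝ)-1)/(D*(n:ℝ)^2) := by
        field_simp
      rw [h1, h2, div_le_div_iff₀ (by positivity) (by positivity)]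
      nlinarith [mul_nonneg (mul_nonneg hD0.le hn0.le) (sub_nonneg.2 hn2')]
    calc C / (n:ℝ) ≤ ((n:ℝ) - 1) * ((1/D) / (n:ℝ)^2) := step3
      _ = ∑ m ∈ Icc 2 n, (1/D) / (n:ℝ)^2 := step2.symm
      _ ≤ _ := step1
  -- compare range N sum with Icc 2 N sum
  have hrange : ∑ i ∈ range N, C / (i:ℝ) ≤ C + ∑ n ∈ Icc 2 N, C / (n:ℝ) := by
    have hsub : range N ⊆ insert 0 (insert 1 (Icc 2 N)) := by
      intro i hi
      simp only [mem_range] at hi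
      simp only [mem_insert, mem_Icc]
      omega
    have := Finset.sum_le_sum_of_subset_of_nonneg hsub
      (fun i _ _ => div_nonneg hC0.le (Nat.cast_nonneg i))
    calc ∑ i ∈ range N, C / (i:ℝ)
        ≤ ∑ i ∈ insert 0 (insert 1 (Icc 2 N)), C / (i:ℝ) := this
      _ ≤ C + ∑ n ∈ Icc 2 N, C / (n:ℝ) := by
          rw [Finset.sum_insert (by simp [mem_insert, mem_Icc]),
            Finset.sum_insert (by simp [mem_Icc])]
          norm_num
  -- put it together
  have hfinal : ∑ p ∈ s, f p ≤ ∑' p, f p :=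
    Summable.sum_le_tsum s (fun p _ => hfnonneg p) hsum
  have hchain : ∑ n ∈ Icc 2 N, C / (n:ℝ) ≤ ∑ p ∈ s, f p := by
    rw [hsum_s, hsum_t]
    exact Finset.sum_le_sum hinner
  linarith
end

section
/- Under the same two-sided bounds on k'_{n,m}, there is a constant C > 0 such that for every n ≥ 1, Σ_{m≥2} 1/( k'_{n,m}² · (k'_{n,m}² − n²) ) ≥ C/n³. -/
open Real

/-- Under the two-sided bounds
`n + c(m−1)^{2/3} n^{1/3} < k'_{n,m} < n + c m^{2/3} n^{1/3} + c m^{4/3} n^{-1/3}` (`c > 0`),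
there is `C > 0` such that for every `n ≥ 1`,
`Σ_{m≥2} 1/(k'_{n,m}² (k'_{n,m}² − n²)) ≥ C/n³`. -/
theorem inner_series_lower_bound (c : ℝ) (hc : 0 < c) (k' : ℕ → ℕ → ℝ)
    (hlow : ∀ n m : ℕ, 1 ≤ n → 2 ≤ m →
      (n : ℝ) + c * ((m : ℝ) - 1) ^ ((2 : ℝ) / 3) * (n : ℝ) ^ ((1 : ℝ) / 3) < k' n m)
    (hup : ∀ n m : ℕ, 1 ≤ n → 2 ≤ m →
      k' n m < (n : ℝ) + c * (m : ℝ) ^ ((2 : ℝ) / 3) * (n : ℝ) ^ ((1 : ℝ) / 3) +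
        c * (m : ℝ) ^ ((4 : ℝ) / 3) * (n : ℝ) ^ (-(1 : ℝ) / 3)) :
    ∃ C : ℝ, 0 < C ∧ ∀ n : ℕ, 1 ≤ n →
      C / (n : ℝ) ^ 3 ≤
        ∑' m : {m : ℕ // 2 ≤ m}, 1 / (k' n m ^ 2 * (k' n m ^ 2 - (n : ℝ) ^ 2)) := by
  classical
  obtain ⟨K, hKdef⟩ : ∃ K : ℝ, K = 1 + c * 4 ^ ((2:ℝ)/3) + c * 4 ^ ((4:ℝ)/3) := ⟨_, rfl⟩
  have h4a : (0:ℝ) < 4 ^ ((2:ℝ)/3) := rpow_pos_of_pos (by norm_num) _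
  have h4b : (0:ℝ) < 4 ^ ((4:ℝ)/3) := rpow_pos_of_pos (by norm_num) _
  have hK1 : (1:ℝ) ≤ K := by
    rw [hKdef]; nlinarith [mul_pos hc h4a, mul_pos hc h4b]
  have hKpos : (0:ℝ) < K := lt_of_lt_of_le one_pos hK1
  refine ⟨1 / K ^ 4, by positivity, ?_⟩
  intro n hn
  have hn1 : (1:ℝ) ≤ (n:ℝ) := by exact_mod_cast hn
  have hnpos : (0:ℝ) < (n:ℝ) := lt_of_lt_of_le one_pos hn1
  have hn13 : (1:ℝ) ≤ (n:ℝ) ^ ((1:ℝ)/3) := by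
    calc (1:ℝ) = (1:ℝ) ^ ((1:ℝ)/3) := (one_rpow _).symm
    _ ≤ (n:ℝ) ^ ((1:ℝ)/3) := rpow_le_rpow (by norm_num) hn1 (by norm_num)
  -- k' > n
  have hkgt : ∀ m : ℕ, 2 ≤ m → (n:ℝ) < k' n m := by
    intro m hm
    have h := hlow n m hn hm
    have hm1 : (1:ℝ) ≤ (m:ℝ) - 1 := by
      have : (2:ℝ) ≤ (m:ℝ) := by exact_mod_cast hm
      linarith
    have hpos : 0 < c * ((m:ℝ)-1) ^ ((2:ℝ)/3) * (n:ℝ) ^ ((1:ℝ)/3) :=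
      mul_pos (mul_pos hc (rpow_pos_of_pos (by linarith) _)) (rpow_pos_of_pos hnpos _)
    linarith
  have hkpos : ∀ m : ℕ, 2 ≤ m → 0 < k' n m := fun m hm => lt_trans hnpos (hkgt m hm)
  have hden : ∀ m : ℕ, 2 ≤ m → 0 < k' n m ^ 2 * (k' n m ^ 2 - (n:ℝ)^2) := by
    intro m hm
    have h1 := hkgt m hm
    have h2 := hkpos m hm
    have h3 : 0 < k' n m ^ 2 - (n:ℝ)^2 := by nlinarith [mul_pos (sub_pos.mpr h1) (by linarith : (0:ℝ) < k' n m + n)]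
    exact mul_pos (pow_pos h2 2) h3
  have hfnonneg : ∀ m : {m : ℕ // 2 ≤ m},
      0 ≤ 1 / (k' n (m:ℕ) ^ 2 * (k' n (m:ℕ) ^ 2 - (n:ℝ)^2)) :=
    fun m => le_of_lt (one_div_pos.mpr (hden m m.2))
  -- lower bound on denominator for summability
  have hlb : ∀ m : ℕ, 2 ≤ m →
      c^3 * ((m:ℝ)-1)^2 ≤ k' n m ^ 2 * (k' n m ^ 2 - (n:ℝ)^2) := by
    intro m hm
    have hm1 : (1:ℝ) ≤ (m:ℝ) - 1 := by
      have : (2:ℝ) ≤ (m:ℝ) := by exact_mod_cast hm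
      linarith
    have hl := hlow n m hn hm
    obtain ⟨B, hB⟩ : ∃ B : ℝ, B = c * ((m:ℝ)-1) ^ ((2:ℝ)/3) := ⟨_, rfl⟩
    rw [show c * ((m:ℝ)-1) ^ ((2:ℝ)/3) * (n:ℝ) ^ ((1:ℝ)/3)
        = B * (n:ℝ) ^ ((1:ℝ)/3) by rw [hB]] at hl
    have hBpos : 0 < B := by
      rw [hB]; exact mul_pos hc (rpow_pos_of_pos (by linarith) _)
    have hAB : B ≤ B * (n:ℝ) ^ ((1:ℝ)/3) := by nlinarith [hn13, hBpos]
    have hkB : (n:ℝ) + B < k' n m := by linarith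
    have h23 : (((m:ℝ)-1) ^ ((2:ℝ)/3))^(3:ℕ) = ((m:ℝ)-1)^(2:ℕ) := by
      rw [← rpow_natCast (((m:ℝ)-1) ^ ((2:ℝ)/3)) 3,
        ← rpow_mul (by linarith : (0:ℝ) ≤ (m:ℝ)-1),
        ← rpow_natCast ((m:ℝ)-1) 2]
      norm_num
    have hB3 : B^3 = c^3 * ((m:ℝ)-1)^2 := by
      rw [hB, mul_pow, h23]
    have hk2 : ((n:ℝ)+B)^2 < k' n m ^2 := by
      have := pow_lt_pow_left₀ hkB (by positivity) (by norm_num : 2 ≠ 0)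
      exact this
    have h5 : B ≤ k' n m ^2 - (n:ℝ)^2 := by
      nlinarith [hk2, mul_nonneg hBpos.le (by linarith : (0:ℝ) ≤ 2*(n:ℝ)-1), sq_nonneg B]
    have h6 : B^2 ≤ k' n m ^2 := by
      have hBk : B < k' n m := by linarith
      exact pow_le_pow_left₀ hBpos.le hBk.le 2
    calc c^3 * ((m:ℝ)-1)^2 = B^2 * B := by rw [← hB3]; ring
      _ ≤ k' n m ^2 * (k' n m ^2 - (n:ℝ)^2) := mul_le_mul h6 h5 hBpos.le (sq_nonneg _)
  -- summability
  have hsum2 : Summable (fun m : ℕ => (1:ℝ) / (m:ℝ)^2) := by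
    simpa using Real.summable_one_div_nat_pow.mpr (by norm_num : 1 < 2)
  have hsum3 : Summable (fun m : {m : ℕ // 2 ≤ m} => (4 / c^3) * ((1:ℝ) / ((m:ℕ):ℝ)^2)) :=
    (hsum2.subtype _).mul_left _
  have hsummable : Summable (fun m : {m : ℕ // 2 ≤ m} =>
      1 / (k' n (m:ℕ) ^ 2 * (k' n (m:ℕ) ^ 2 - (n:ℝ)^2))) := by
    apply Summable.of_nonneg_of_le hfnonneg _ hsum3
    intro m
    have hm2 : (2:ℝ) ≤ ((m:ℕ):ℝ) := by exact_mod_cast m.2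
    have hmpos : (0:ℝ) < ((m:ℕ):ℝ) := by linarith
    have h1 : c^3 * (((m:ℕ):ℝ)^2/4) ≤ c^3 * (((m:ℕ):ℝ)-1)^2 := by
      nlinarith [pow_pos hc 3, sq_nonneg (((m:ℕ):ℝ)-2), hm2]
    have h2 := hlb m m.2
    calc 1 / (k' n (m:ℕ) ^ 2 * (k' n (m:ℕ) ^ 2 - (n:ℝ)^2))
        ≤ 1 / (c^3 * (((m:ℕ):ℝ)^2/4)) := by
          apply one_div_le_one_div_of_le (by positivity)
          linarith
      _ = (4 / c^3) * ((1:ℝ) / ((m:ℕ):ℝ)^2) := by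
          field_simp
  -- finite sum lower bound over m ∈ [2, 2n+2]
  have hterm : ∀ m : ℕ, 2 ≤ m → m ≤ 2*n+2 → 1/(K^4 * (n:ℝ)^4) ≤
      1 / (k' n m ^ 2 * (k' n m ^ 2 - (n:ℝ)^2)) := by
    intro m hm2 hm4
    have hm4n : ((m:ℕ):ℝ) ≤ 4*(n:ℝ) := by
      have h : (m:ℕ) ≤ 4*n := by omega
      calc ((m:ℕ):ℝ) ≤ ((4*n : ℕ):ℝ) := by exact_mod_cast h
        _ = 4*(n:ℝ) := by push_cast; ring
    have hub := hup n m hn hm2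
    have h1 : ((m:ℕ):ℝ)^((2:ℝ)/3) ≤ 4^((2:ℝ)/3) * (n:ℝ)^((2:ℝ)/3) := by
      rw [← Real.mul_rpow (by norm_num) hnpos.le]
      exact rpow_le_rpow (Nat.cast_nonneg _) hm4n (by norm_num)
    have h2 : ((m:ℕ):ℝ)^((4:ℝ)/3) ≤ 4^((4:ℝ)/3) * (n:ℝ)^((4:ℝ)/3) := by
      rw [← Real.mul_rpow (by norm_num) hnpos.le]
      exact rpow_le_rpow (Nat.cast_nonneg _) hm4n (by norm_num)
    have e1 : (n:ℝ)^((2:ℝ)/3) * (n:ℝ)^((1:ℝ)/3) = (n:ℝ) := by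
      rw [← rpow_add hnpos]
      norm_num
    have e2 : (n:ℝ)^((4:ℝ)/3) * (n:ℝ)^(-(1:ℝ)/3) = (n:ℝ) := by
      rw [← rpow_add hnpos]
      norm_num
    have hp13 : (0:ℝ) ≤ (n:ℝ)^((1:ℝ)/3) := (rpow_pos_of_pos hnpos _).le
    have hpm13 : (0:ℝ) ≤ (n:ℝ)^(-(1:ℝ)/3) := (rpow_pos_of_pos hnpos _).le
    have t1 : c * ((m:ℕ):ℝ)^((2:ℝ)/3) * (n:ℝ)^((1:ℝ)/3) ≤ c * 4^((2:ℝ)/3) * (n:ℝ) := by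
      calc c * ((m:ℕ):ℝ)^((2:ℝ)/3) * (n:ℝ)^((1:ℝ)/3)
          ≤ c * (4^((2:ℝ)/3) * (n:ℝ)^((2:ℝ)/3)) * (n:ℝ)^((1:ℝ)/3) :=
            mul_le_mul_of_nonneg_right (mul_le_mul_of_nonneg_left h1 hc.le) hp13
        _ = c * 4^((2:ℝ)/3) * ((n:ℝ)^((2:ℝ)/3) * (n:ℝ)^((1:ℝ)/3)) := by ring
        _ = c * 4^((2:ℝ)/3) * (n:ℝ) := by rw [e1]
    have t2 : c * ((m:ℕ):ℝ)^((4:ℝ)/3) * (n:ℝ)^(-(1:ℝ)/3) ≤ c * 4^((4:ℝ)/3) * (n:ℝ) := by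
      calc c * ((m:ℕ):ℝ)^((4:ℝ)/3) * (n:ℝ)^(-(1:ℝ)/3)
          ≤ c * (4^((4:ℝ)/3) * (n:ℝ)^((4:ℝ)/3)) * (n:ℝ)^(-(1:ℝ)/3) :=
            mul_le_mul_of_nonneg_right (mul_le_mul_of_nonneg_left h2 hc.le) hpm13
        _ = c * 4^((4:ℝ)/3) * ((n:ℝ)^((4:ℝ)/3) * (n:ℝ)^(-(1:ℝ)/3)) := by ring
        _ = c * 4^((4:ℝ)/3) * (n:ℝ) := by rw [e2]
    have hkK : k' n (m:ℕ) ≤ K * (n:ℝ) := by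
      calc k' n m ≤ (n:ℝ) + c * ((m:ℕ):ℝ)^((2:ℝ)/3) * (n:ℝ)^((1:ℝ)/3) +
            c * ((m:ℕ):ℝ)^((4:ℝ)/3) * (n:ℝ)^(-(1:ℝ)/3) := hub.le
        _ ≤ (n:ℝ) + c * 4^((2:ℝ)/3) * (n:ℝ) + c * 4^((4:ℝ)/3) * (n:ℝ) :=
            add_le_add (add_le_add le_rfl t1) t2
        _ = K * (n:ℝ) := by rw [hKdef]; ring
    have hk := hkpos m hm2
    have hgt := hkgt m hm2
    apply one_div_le_one_div_of_le (hden m hm2)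
    have hk2 : k' n (m:ℕ) ^2 ≤ (K*(n:ℝ))^2 := pow_le_pow_left₀ hk.le hkK 2
    have hsub : k' n (m:ℕ) ^2 - (n:ℝ)^2 ≤ (K*(n:ℝ))^2 :=
      (sub_le_self _ (sq_nonneg _)).trans hk2
    have hpos2 : (0:ℝ) ≤ k' n (m:ℕ) ^2 - (n:ℝ)^2 :=
      sub_nonneg.mpr (pow_le_pow_left₀ hnpos.le hgt.le 2)
    calc k' n (m:ℕ) ^2 * (k' n (m:ℕ) ^2 - (n:ℝ)^2)
        ≤ (K*(n:ℝ))^2 * (K*(n:ℝ))^2 := mul_le_mul hk2 hsub hpos2 (sq_nonneg _)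
      _ = K^4 * (n:ℝ)^4 := by ring
  have hsum_lower : (2*(n:ℝ)+1) * (1/(K^4 * (n:ℝ)^4)) ≤
      ∑' m : {m : ℕ // 2 ≤ m}, 1 / (k' n (m:ℕ) ^ 2 * (k' n (m:ℕ) ^ 2 - (n:ℝ)^2)) := by
    set s : Finset {m : ℕ // 2 ≤ m} := (Finset.Icc 2 (2*n+2)).subtype (fun m => 2 ≤ m) with hs
    have hcard : s.card = 2*n+1 := by
      rw [hs, Finset.card_subtype,
        Finset.filter_true_of_mem (fun m hm => (Finset.mem_Icc.mp hm).1), Nat.card_Icc]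
      omega
    have hterm' : ∀ m ∈ s, 1/(K^4 * (n:ℝ)^4) ≤
        1 / (k' n (m:ℕ) ^ 2 * (k' n (m:ℕ) ^ 2 - (n:ℝ)^2)) := by
      intro m hm
      rw [hs] at hm
      have hmIcc : (m:ℕ) ∈ Finset.Icc 2 (2*n+2) := Finset.mem_subtype.mp hm
      obtain ⟨h2', h4'⟩ := Finset.mem_Icc.mp hmIcc
      exact hterm m h2' h4'
    have h1 := Finset.card_nsmul_le_sum s _ _ hterm'
    have hts := Summable.sum_le_tsum s (fun m _ => hfnonneg m) hsummable
    refine le_trans ?_ (le_trans h1 hts)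
    rw [hcard, nsmul_eq_mul]
    have : ((2*n+1 : ℕ):ℝ) = 2*(n:ℝ)+1 := by push_cast; ring
    rw [this]
  refine le_trans ?_ hsum_lower
  have key : 1/K^4/(n:ℝ)^3 = (n:ℝ) * (1/(K^4*(n:ℝ)^4)) := by
    field_simp
  rw [key]
  exact mul_le_mul_of_nonneg_right (by linarith [hnpos]) (by positivity)
end

section
/- Let J : H₁ → H₂ be a bounded operator between Hilbert spaces with dense range, and let K₁ be a bounded operator on H₁. Then for every β > 0, the operator D_β := (JK₁)* (1/β + JJ*)^{-1} (JK₁) satisfies: D_β is nonnegative, D_β increases in β, and if Ȟ := (JJ*)^{-1} (densely defined) is such that Ȟ^{1/2} J K₁ is bounded, then D_β converges strongly as β → ∞ to D_∞ := (Ȟ^{1/2}JK₁)* Ȟ^{1/2}JK₁. -/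
set_option maxHeartbeats 1000000


open scoped RealInnerProductSpace
open ContinuousLinearMap Filter

/-- Let `J : H₁ → H₂` be bounded with dense range and `K₁` bounded on `H₁`.  For `β > 0`
let `Rb β = (1/β + JJ*)⁻¹` (given as a two-sided inverse) and
`D_β = (JK₁)* (1/β + JJ*)⁻¹ (JK₁)`.  Let `S = (JJ*)^{1/2}` (the nonnegative selfadjoint
square root of `JJ*`) and suppose `Ȟ^{1/2}JK₁` is bounded, encoded by `B : H₁ → H₂` with
`S ∘ B = J ∘ K₁` (so that `B = Ȟ^{1/2}JK₁`, `Ȟ = (JJ*)⁻¹`).  Then each `D_β` is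
nonnegative, `D_β` increases in `β`, and `D_β → D_∞ := (Ȟ^{1/2}JK₁)* Ȟ^{1/2}JK₁ = B*B`
strongly as `β → ∞`. -/
theorem Dbeta_nonneg_monotone_strong_limit
    {H₁ H₂ : Type*}
    [NormedAddCommGroup H₁] [InnerProductSpace ℝ H₁] [CompleteSpace H₁]
    [NormedAddCommGroup H₂] [InnerProductSpace ℝ H₂] [CompleteSpace H₂]
    (J : H₁ →L[ℝ] H₂) (hJ : DenseRange J) (K₁ : H₁ →L[ℝ] H₁)
    (Rb : ℝ → H₂ →L[ℝ] H₂)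
    (hRb : ∀ β : ℝ, 0 < β →
      ((β⁻¹ • (1 : H₂ →L[ℝ] H₂) + J ∘L adjoint J) ∘L Rb β = 1 ∧
        Rb β ∘L (β⁻¹ • (1 : H₂ →L[ℝ] H₂) + J ∘L adjoint J) = 1))
    (S : H₂ →L[ℝ] H₂) (hS_sa : IsSelfAdjoint S) (hS_pos : ∀ x : H₂, 0 ≤ ⟪S x, x⟫)
    (hS_sq : S ∘L S = J ∘L adjoint J)
    (B : H₁ →L[ℝ] H₂) (hB : S ∘L B = J ∘L K₁) :
    (∀ β : ℝ, 0 < β → ∀ x : H₁,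
        0 ≤ ⟪(adjoint (J ∘L K₁) ∘L Rb β ∘L (J ∘L K₁)) x, x⟫) ∧
    (∀ β β' : ℝ, 0 < β → β ≤ β' → ∀ x : H₁,
        ⟪(adjoint (J ∘L K₁) ∘L Rb β ∘L (J ∘L K₁)) x, x⟫ ≤
          ⟪(adjoint (J ∘L K₁) ∘L Rb β' ∘L (J ∘L K₁)) x, x⟫) ∧
    (∀ x : H₁, Tendsto (fun β : ℝ => (adjoint (J ∘L K₁) ∘L Rb β ∘L (J ∘L K₁)) x)
        atTop (nhds ((adjoint B ∘L B) x))) := by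
  classical
  set T : H₂ →L[ℝ] H₂ := J ∘L adjoint J with hTdef
  have hS_adj : adjoint S = S := hS_sa.adjoint_eq
  have hquad : ∀ (β : ℝ) (x : H₁),
      ⟪(adjoint (J ∘L K₁) ∘L Rb β ∘L (J ∘L K₁)) x, x⟫
        = ⟪Rb β ((J ∘L K₁) x), (J ∘L K₁) x⟫ := by
    intro β x
    simp [ContinuousLinearMap.comp_apply, ContinuousLinearMap.adjoint_inner_left]
  have hARb : ∀ β : ℝ, 0 < β → ∀ z : H₂,
      β⁻¹ • Rb β z + T (Rb β z) = z := by
    intro β hβ z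
    have h := ContinuousLinearMap.ext_iff.mp (hRb β hβ).1 z
    simpa [ContinuousLinearMap.comp_apply, ContinuousLinearMap.add_apply,
      ContinuousLinearMap.smul_apply] using h
  have hRbA : ∀ β : ℝ, 0 < β → ∀ z : H₂,
      β⁻¹ • Rb β z + Rb β (T z) = z := by
    intro β hβ z
    have h := ContinuousLinearMap.ext_iff.mp (hRb β hβ).2 z
    simpa [ContinuousLinearMap.comp_apply, ContinuousLinearMap.add_apply,
      ContinuousLinearMap.smul_apply, map_add, map_smul] using h
  have hST : S ∘L T = T ∘L S := by
    rw [← hS_sq, ← ContinuousLinearMap.comp_assoc, ContinuousLinearMap.comp_assoc]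
  have hSA : ∀ β : ℝ,
      S ∘L (β⁻¹ • (1 : H₂ →L[ℝ] H₂) + T) = (β⁻¹ • (1 : H₂ →L[ℝ] H₂) + T) ∘L S := by
    intro β
    simp [ContinuousLinearMap.comp_add, ContinuousLinearMap.add_comp,
      ContinuousLinearMap.comp_smul, ContinuousLinearMap.smul_comp, hST,
      ContinuousLinearMap.one_def, ContinuousLinearMap.comp_id,
      ContinuousLinearMap.id_comp]
  have hSRb : ∀ β : ℝ, 0 < β → S ∘L Rb β = Rb β ∘L S := by
    intro β hβ
    calc S ∘L Rb β
        = (Rb β ∘L (β⁻¹ • (1 : H₂ →L[ℝ] H₂) + T)) ∘L (S ∘L Rb β) := by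
          rw [(hRb β hβ).2, ContinuousLinearMap.one_def,
            ContinuousLinearMap.id_comp]
      _ = Rb β ∘L (((β⁻¹ • (1 : H₂ →L[ℝ] H₂) + T) ∘L S) ∘L Rb β) := by
          rw [ContinuousLinearMap.comp_assoc, ContinuousLinearMap.comp_assoc]
      _ = Rb β ∘L ((S ∘L (β⁻¹ • (1 : H₂ →L[ℝ] H₂) + T)) ∘L Rb β) := by rw [hSA]
      _ = (Rb β ∘L S) ∘L ((β⁻¹ • (1 : H₂ →L[ℝ] H₂) + T) ∘L Rb β) := by
          rw [ContinuousLinearMap.comp_assoc, ContinuousLinearMap.comp_assoc]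
      _ = Rb β ∘L S := by
          rw [(hRb β hβ).1, ContinuousLinearMap.one_def,
            ContinuousLinearMap.comp_id]
  -- the value of the quadratic form of Rb β
  have hval : ∀ β : ℝ, 0 < β → ∀ z : H₂,
      ⟪Rb β z, z⟫ = β⁻¹ * ⟪Rb β z, Rb β z⟫
        + ⟪adjoint J (Rb β z), adjoint J (Rb β z)⟫ := by
    intro β hβ z
    have hz := hARb β hβ z
    set w := Rb β z with hw
    calc ⟪w, z⟫ = ⟪w, β⁻¹ • w + T w⟫ := by rw [hz]
      _ = β⁻¹ * ⟪w, w⟫ + ⟪w, T w⟫ := by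
          rw [inner_add_right, real_inner_smul_right]
      _ = β⁻¹ * ⟪w, w⟫ + ⟪adjoint J w, adjoint J w⟫ := by
          congr 1
          rw [hTdef]
          exact (ContinuousLinearMap.adjoint_inner_left J (adjoint J w) w).symm
  have hpos : ∀ β : ℝ, 0 < β → ∀ z : H₂, 0 ≤ ⟪Rb β z, z⟫ := by
    intro β hβ z
    rw [hval β hβ z]
    have h1 : (0:ℝ) ≤ ⟪Rb β z, Rb β z⟫ := real_inner_self_nonneg
    have h2 : (0:ℝ) ≤ ⟪adjoint J (Rb β z), adjoint J (Rb β z)⟫ := real_inner_self_nonneg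
    have h3 : (0:ℝ) ≤ β⁻¹ := le_of_lt (inv_pos.mpr hβ)
    nlinarith
  have hnorm : ∀ β : ℝ, 0 < β → ∀ z : H₂, ‖Rb β z‖ ≤ β * ‖z‖ := by
    intro β hβ z
    have h1 : β⁻¹ * ‖Rb β z‖ ^ 2 ≤ ⟪Rb β z, z⟫ := by
      rw [hval β hβ z, real_inner_self_eq_norm_sq]
      have h2 : (0:ℝ) ≤ ⟪adjoint J (Rb β z), adjoint J (Rb β z)⟫ := real_inner_self_nonneg
      nlinarith
    have h2 : ⟪Rb β z, z⟫ ≤ ‖Rb β z‖ * ‖z‖ := real_inner_le_norm _ _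
    rcases eq_or_lt_of_le (norm_nonneg (Rb β z)) with h0 | h0
    · rw [← h0]; positivity
    · have h3 : β⁻¹ * ‖Rb β z‖ ^ 2 ≤ ‖Rb β z‖ * ‖z‖ := le_trans h1 h2
      have h4 : ‖Rb β z‖ ^ 2 ≤ β * (‖Rb β z‖ * ‖z‖) := by
        have h5 := mul_le_mul_of_nonneg_left h3 hβ.le
        rw [← mul_assoc, mul_inv_cancel₀ hβ.ne', one_mul] at h5
        exact h5
      nlinarith [h4]
  have hRbT : ∀ β : ℝ, 0 < β → ∀ u : H₂,
      Rb β (T u) = u - β⁻¹ • Rb β u := by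
    intro β hβ u
    have h := hRbA β hβ u
    rw [eq_sub_iff_add_eq, add_comm]
    exact h
  have hTRb : ∀ β : ℝ, 0 < β → ∀ u : H₂,
      T (Rb β u) = u - β⁻¹ • Rb β u := by
    intro β hβ u
    have h := hARb β hβ u
    rw [eq_sub_iff_add_eq, add_comm]
    exact h
  have hkey : ∀ β : ℝ, 0 < β → ∀ x : H₁,
      (adjoint (J ∘L K₁) ∘L Rb β ∘L (J ∘L K₁)) x
        = adjoint B (B x) - β⁻¹ • adjoint B (Rb β (B x)) := by
    intro β hβ x
    have hJK : (J ∘L K₁) = S ∘L B := hB.symm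
    have hAdj : adjoint (J ∘L K₁) = adjoint B ∘L S := by
      rw [hJK, ContinuousLinearMap.adjoint_comp, hS_adj]
    have hcomm : ∀ w : H₂, S (Rb β w) = Rb β (S w) := fun w =>
      ContinuousLinearMap.ext_iff.mp (hSRb β hβ) w
    have hSS : ∀ w : H₂, S (S w) = T w := fun w =>
      ContinuousLinearMap.ext_iff.mp hS_sq w
    calc (adjoint (J ∘L K₁) ∘L Rb β ∘L (J ∘L K₁)) x
        = adjoint B (S (Rb β (S (B x)))) := by
          rw [hAdj, hJK]
          simp [ContinuousLinearMap.comp_apply]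
      _ = adjoint B (S (S (Rb β (B x)))) := by
          rw [(hcomm (B x)).symm]
      _ = adjoint B (T (Rb β (B x))) := by rw [hSS]
      _ = adjoint B (B x - β⁻¹ • Rb β (B x)) := by rw [hTRb β hβ]
      _ = adjoint B (B x) - β⁻¹ • adjoint B (Rb β (B x)) := by
          rw [map_sub, map_smul]
  refine ⟨?_, ?_, ?_⟩
  · intro β hβ x
    rw [hquad]
    exact hpos β hβ _
  · intro β β' hβ hββ' x
    have hβ' : 0 < β' := lt_of_lt_of_le hβ hββ'
    rw [hquad, hquad]
    set z := (J ∘L K₁) x with hzdef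
    have hc : (0:ℝ) ≤ β⁻¹ - β'⁻¹ := by
      have := inv_anti₀ hβ hββ'
      linarith
    have hz : z = β'⁻¹ • Rb β' z + T (Rb β' z) := (hARb β' hβ' z).symm
    have hdiff : Rb β z = Rb β' z - (β⁻¹ - β'⁻¹) • Rb β (Rb β' z) := by
      calc Rb β z = Rb β (β'⁻¹ • Rb β' z + T (Rb β' z)) := by rw [← hz]
        _ = β'⁻¹ • Rb β (Rb β' z) + Rb β (T (Rb β' z)) := by rw [map_add, map_smul]
        _ = β'⁻¹ • Rb β (Rb β' z) + (Rb β' z - β⁻¹ • Rb β (Rb β' z)) := by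
            rw [hRbT β hβ]
        _ = Rb β' z - (β⁻¹ - β'⁻¹) • Rb β (Rb β' z) := by
            rw [sub_smul]; abel
    have hinner : (0:ℝ) ≤ ⟪Rb β (Rb β' z), z⟫ := by
      nth_rewrite 2 [hz]
      rw [inner_add_right, real_inner_smul_right]
      have hterm2 : ⟪Rb β (Rb β' z), T (Rb β' z)⟫
          = ⟪Rb β (S (Rb β' z)), S (Rb β' z)⟫ := by
        have hcomm : S (Rb β (Rb β' z)) = Rb β (S (Rb β' z)) :=
          ContinuousLinearMap.ext_iff.mp (hSRb β hβ) (Rb β' z)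
        have hSS : S (S (Rb β' z)) = T (Rb β' z) :=
          ContinuousLinearMap.ext_iff.mp hS_sq (Rb β' z)
        calc ⟪Rb β (Rb β' z), T (Rb β' z)⟫
            = ⟪Rb β (Rb β' z), S (S (Rb β' z))⟫ := by rw [hSS]
          _ = ⟪S (Rb β (Rb β' z)), S (Rb β' z)⟫ := by
              nth_rewrite 1 [← hS_adj]
              rw [ContinuousLinearMap.adjoint_inner_right]
          _ = ⟪Rb β (S (Rb β' z)), S (Rb β' z)⟫ := by rw [hcomm]
      rw [hterm2]
      have h1 : (0:ℝ) ≤ ⟪Rb β (Rb β' z), Rb β' z⟫ := hpos β hβ (Rb β' z)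
      have h2 : (0:ℝ) ≤ ⟪Rb β (S (Rb β' z)), S (Rb β' z)⟫ := hpos β hβ (S (Rb β' z))
      have h3 : (0:ℝ) ≤ β'⁻¹ := le_of_lt (inv_pos.mpr hβ')
      positivity
    calc ⟪Rb β z, z⟫
        = ⟪Rb β' z, z⟫ - (β⁻¹ - β'⁻¹) * ⟪Rb β (Rb β' z), z⟫ := by
          rw [hdiff, inner_sub_left, real_inner_smul_left]
      _ ≤ ⟪Rb β' z, z⟫ := by nlinarith [mul_nonneg hc hinner]
  · intro x
    have hT_dense : Dense (Set.range (T : H₂ → H₂)) := by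
      have hbot : (LinearMap.range (T : H₂ →ₗ[ℝ] H₂))ᗮ = ⊥ := by
        rw [Submodule.eq_bot_iff]
        intro v hv
        have hv' : ∀ u : H₂, ⟪T u, v⟫ = 0 := by
          intro u
          exact (Submodule.mem_orthogonal _ v).mp hv (T u) ⟨u, rfl⟩
        have hJv : adjoint J v = 0 := by
          have h0 : ⟪T v, v⟫ = 0 := hv' v
          rw [hTdef, ContinuousLinearMap.comp_apply] at h0
          have h1 : ⟪adjoint J v, adjoint J v⟫ = (0:ℝ) := by
            rw [ContinuousLinearMap.adjoint_inner_left, real_inner_comm]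
            exact h0
          exact inner_self_eq_zero.mp h1
        have hallJ : ∀ y : H₂, ⟪y, v⟫ = 0 := by
          have hclosed : IsClosed {y : H₂ | ⟪y, v⟫ = 0} :=
            isClosed_eq (continuous_id.inner continuous_const) continuous_const
          intro y
          refine hJ.induction_on y hclosed ?_
          intro a
          show ⟪J a, v⟫ = 0
          rw [real_inner_comm, ← ContinuousLinearMap.adjoint_inner_left, hJv,
            inner_zero_left]
        exact inner_self_eq_zero.mp (hallJ v)
      have htop : (LinearMap.range (T : H₂ →ₗ[ℝ] H₂)).topologicalClosure = ⊤ :=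
        Submodule.topologicalClosure_eq_top_iff.mpr hbot
      have hd : Dense ((LinearMap.range (T : H₂ →ₗ[ℝ] H₂) : Submodule ℝ H₂) : Set H₂) := by
        rw [Submodule.dense_iff_topologicalClosure_eq_top]
        exact htop
      simpa [LinearMap.coe_range, ContinuousLinearMap.coe_coe] using hd
    have hg : Tendsto (fun β : ℝ => β⁻¹ • Rb β (B x)) atTop (nhds (0 : H₂)) := by
      rw [Metric.tendsto_atTop]
      intro ε hε
      obtain ⟨y, ⟨u, hu⟩, hdist⟩ := Metric.mem_closure_iff.mp
        (hT_dense (B x)) (ε/2) (by linarith)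
      rw [← hu] at hdist
      refine ⟨max 1 (8 * (‖u‖ + 1) / ε), fun β hβN => ?_⟩
      have hβ1 : (1:ℝ) ≤ β := le_trans (le_max_left _ _) hβN
      have hβ : (0:ℝ) < β := lt_of_lt_of_le one_pos hβ1
      have hβ2 : 8 * (‖u‖ + 1) / ε ≤ β := le_trans (le_max_right _ _) hβN
      have hβinv : (0:ℝ) < β⁻¹ := inv_pos.mpr hβ
      rw [dist_eq_norm, sub_zero, norm_smul]
      have hsplit : Rb β (B x) = Rb β (B x - T u) + Rb β (T u) := by
        rw [← map_add]; congr 1; abel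
      have hb1 : ‖Rb β (B x - T u)‖ ≤ β * ‖B x - T u‖ := hnorm β hβ _
      have hb2 : ‖Rb β (T u)‖ ≤ 2 * ‖u‖ := by
        rw [hRbT β hβ]
        calc ‖u - β⁻¹ • Rb β u‖ ≤ ‖u‖ + ‖β⁻¹ • Rb β u‖ := norm_sub_le _ _
          _ = ‖u‖ + β⁻¹ * ‖Rb β u‖ := by
              rw [norm_smul, Real.norm_eq_abs, abs_of_pos hβinv]
          _ ≤ ‖u‖ + β⁻¹ * (β * ‖u‖) := by
              have h := hnorm β hβ u
              nlinarith
          _ = ‖u‖ + ‖u‖ := by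
              rw [← mul_assoc, inv_mul_cancel₀ hβ.ne', one_mul]
          _ = 2 * ‖u‖ := by ring
      have hzTu : ‖B x - T u‖ < ε / 2 := by
        rw [← dist_eq_norm]; exact hdist
      have hβε : 8 * (‖u‖ + 1) ≤ β * ε := by
        rw [div_le_iff₀ hε] at hβ2; linarith
      have hsmall : β⁻¹ * (2 * ‖u‖) < ε / 2 := by
        have h4 : 4 * ‖u‖ < β * ε := by nlinarith [norm_nonneg u]
        have h5 := mul_lt_mul_of_pos_left h4 hβinv
        have h6 : β⁻¹ * (β * ε) = ε := by
          rw [← mul_assoc, inv_mul_cancel₀ hβ.ne', one_mul]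
        rw [h6] at h5
        linarith
      calc ‖β⁻¹‖ * ‖Rb β (B x)‖ = β⁻¹ * ‖Rb β (B x)‖ := by
            rw [Real.norm_eq_abs, abs_of_pos hβinv]
        _ ≤ β⁻¹ * (‖Rb β (B x - T u)‖ + ‖Rb β (T u)‖) := by
            rw [hsplit]
            exact mul_le_mul_of_nonneg_left (norm_add_le _ _) (le_of_lt hβinv)
        _ ≤ β⁻¹ * (β * ‖B x - T u‖ + 2 * ‖u‖) := by
            have h := add_le_add hb1 hb2
            exact mul_le_mul_of_nonneg_left h (le_of_lt hβinv)
        _ = ‖B x - T u‖ + β⁻¹ * (2 * ‖u‖) := by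
            rw [mul_add, ← mul_assoc, inv_mul_cancel₀ hβ.ne', one_mul]
        _ < ε / 2 + ε / 2 := by linarith
        _ = ε := by ring
    have hBadj : Tendsto (fun β : ℝ => β⁻¹ • adjoint B (Rb β (B x)))
        atTop (nhds (0 : H₁)) := by
      have h := ((adjoint B).continuous.tendsto (0 : H₂)).comp hg
      simpa [Function.comp_def, map_smul] using h
    have hlim : Tendsto (fun β : ℝ =>
        (adjoint B ∘L B) x - β⁻¹ • adjoint B (Rb β (B x)))
        atTop (nhds ((adjoint B ∘L B) x)) := by
      have h := (tendsto_const_nhds (x := (adjoint B ∘L B) x)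
        (f := (atTop : Filter ℝ))).sub hBadj
      simpa using h
    refine hlim.congr' ?_
    filter_upwards [eventually_gt_atTop (0:ℝ)] with β hβ
    rw [hkey β hβ x]
    rfl
end
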